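/- Let (Σ, d) be a metric space with a Borel measure μ satisfying μ(Σ) ≤ L, diam(Σ) ≤ L, and μ(B(y,ρ)) ≤ π·ρ² for every y ∈ Σ and every ρ ∈ (0, 1/4], for some constant L ≥ 1. Let C1 ≥ 0 and let H : Σ × Σ → [0,∞) be measurable with H(x,y) ≤ 1/(2π·d(x,y)) + C1 for all x ≠ y. Then there is a constant C3 depending only on L and C1 such that for every p ∈ [1, 2) and every f ∈ L¹(μ), the function v(x) = ∫_Σ H(x,y)·|f(y)| dμ(y) satisfies ‖v‖_{L^p(μ)} ≤ C3·‖f‖_{L¹(μ)} / (2 − p)^{1/p}. -/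

import Mathlib

/-!
Hölder's inequality with exponents `1/p` and `1 - 1/p` against the measure `|f| dμ` gives
`v(x)^p ≤ ‖f‖₁^(p-1) ∫ H(x,y)^p |f y| dμ(y)`; integrating in `x` (Tonelli) reduces the estimate to
the uniform bound `∫ H(x,y)^p dμ(x) ≲ 1/(2-p)`. Off the diagonal, which is null because balls have
measure `≤ πρ²`, `H(x,y)^p ≤ 2((2π d(x,y))⁻¹^p + C1^p)`. By the layer-cake formula the singular
part is controlled by the super-level sets `{(2π d(·,y))⁻¹ > t}`: each is a ball of radius
`1/(2πt)`, of measure at most `1/(4πt²)` for `t ≥ 1`, and `p ∫₁^∞ t^(p-3) dt = p/(2-p)`.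
-/

open MeasureTheory Set Filter Metric Real
open scoped ENNReal Topology

theorem lintegral_mul_rpow_le {β : Type*} [MeasurableSpace β] {ν : Measure β}
    {g F : β → ℝ≥0∞} (hg : AEMeasurable g ν) (hF : AEMeasurable F ν) {p : ℝ} (hp : 1 ≤ p) :
    (∫⁻ y, g y * F y ∂ν) ^ p ≤ (∫⁻ y, g y ^ p * F y ∂ν) * (∫⁻ y, F y ∂ν) ^ (p - 1) := by
  have hp0 : 0 < p := zero_lt_one.trans_le hp
  have hq : 0 ≤ 1 - 1 / p := sub_nonneg.2 ((div_le_one hp0).2 hp)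
  have hgF (y : β) : (g y ^ p * F y) ^ (1 / p) * F y ^ (1 - 1 / p) = g y * F y := by
    rw [ENNReal.mul_rpow_of_nonneg _ _ (by positivity), ← ENNReal.rpow_mul,
      mul_one_div_cancel hp0.ne', ENNReal.rpow_one, mul_assoc,
      ← ENNReal.rpow_add_of_nonneg _ _ (by positivity) hq, add_sub_cancel, ENNReal.rpow_one]
  have h := ENNReal.lintegral_mul_norm_pow_le ((hg.pow_const p).mul hF) hF (by positivity) hq
    (add_sub_cancel _ _)
  simp only [Pi.mul_apply, hgF] at h
  calc (∫⁻ y, g y * F y ∂ν) ^ p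
      ≤ ((∫⁻ y, g y ^ p * F y ∂ν) ^ (1 / p) * (∫⁻ y, F y ∂ν) ^ (1 - 1 / p)) ^ p :=
        ENNReal.rpow_le_rpow h hp0.le
    _ = (∫⁻ y, g y ^ p * F y ∂ν) * (∫⁻ y, F y ∂ν) ^ (p - 1) := by
        rw [ENNReal.mul_rpow_of_nonneg _ _ hp0.le, ← ENNReal.rpow_mul, ← ENNReal.rpow_mul,
          one_div_mul_cancel hp0.ne', ENNReal.rpow_one, sub_mul, one_div_mul_cancel hp0.ne',
          one_mul]

theorem lintegral_rpow_lintegral_mul_le {α β : Type*} [MeasurableSpace α] [MeasurableSpace β]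
    {μ : Measure α} {ν : Measure β} [SFinite μ] [SFinite ν] {G : α → β → ℝ≥0∞} {F : β → ℝ≥0∞}
    (hG : Measurable (Function.uncurry G)) (hF : AEMeasurable F ν) {p : ℝ} (hp : 1 ≤ p)
    {A : ℝ≥0∞} (hA : ∀ y, ∫⁻ x, G x y ^ p ∂μ ≤ A) :
    (∫⁻ x, (∫⁻ y, G x y * F y ∂ν) ^ p ∂μ) ^ (1 / p) ≤ A ^ (1 / p) * ∫⁻ y, F y ∂ν := by
  have hp0 : 0 < p := zero_lt_one.trans_le hp
  have hGp : Measurable fun q : α × β => G q.1 q.2 ^ p := hG.pow_const p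
  have hGpF : AEMeasurable (fun q : α × β => G q.1 q.2 ^ p * F q.2) (μ.prod ν) :=
    hGp.aemeasurable.mul hF.comp_snd
  have hpow : ∫⁻ x, (∫⁻ y, G x y * F y ∂ν) ^ p ∂μ ≤ A * (∫⁻ y, F y ∂ν) ^ p := calc
    ∫⁻ x, (∫⁻ y, G x y * F y ∂ν) ^ p ∂μ
      ≤ ∫⁻ x, (∫⁻ y, G x y ^ p * F y ∂ν) * (∫⁻ y, F y ∂ν) ^ (p - 1) ∂μ :=
        lintegral_mono fun x =>
          lintegral_mul_rpow_le (hG.comp measurable_prodMk_left).aemeasurable hF hp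
    _ = (∫⁻ y, (∫⁻ x, G x y ^ p ∂μ) * F y ∂ν) * (∫⁻ y, F y ∂ν) ^ (p - 1) := by
      rw [lintegral_mul_const'' _ hGpF.lintegral_prod_right', lintegral_lintegral_swap hGpF]
      congr 1
      exact lintegral_congr fun y =>
        lintegral_mul_const (F y) (hGp.comp measurable_prodMk_right : Measurable fun x => _)
    _ ≤ (∫⁻ y, A * F y ∂ν) * (∫⁻ y, F y ∂ν) ^ (p - 1) := by
      gcongr with y
      exact hA y
    _ = A * (∫⁻ y, F y ∂ν) ^ p := by
      rw [lintegral_const_mul'' _ hF, mul_assoc]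
      conv_rhs => rw [← add_sub_cancel 1 p,
        ENNReal.rpow_add_of_nonneg _ _ zero_le_one (sub_nonneg.2 hp), ENNReal.rpow_one]
  calc (∫⁻ x, (∫⁻ y, G x y * F y ∂ν) ^ p ∂μ) ^ (1 / p)
      ≤ (A * (∫⁻ y, F y ∂ν) ^ p) ^ (1 / p) := by gcongr
    _ = A ^ (1 / p) * ∫⁻ y, F y ∂ν := by
      rw [ENNReal.mul_rpow_of_nonneg _ _ (by positivity), ← ENNReal.rpow_mul,
        mul_one_div_cancel hp0.ne', ENNReal.rpow_one]

theorem ofReal_rpow_le_two_mul_add {a b c p : ℝ} (ha : 0 ≤ a) (hb : 0 ≤ b) (hc : c ≤ a + b)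
    (hp : 1 ≤ p) (hp2 : p ≤ 2) :
    ENNReal.ofReal c ^ p ≤ 2 * (ENNReal.ofReal (a ^ p) + ENNReal.ofReal (b ^ p)) := by
  have hp0 : 0 ≤ p := zero_le_one.trans hp
  calc ENNReal.ofReal c ^ p ≤ (ENNReal.ofReal a + ENNReal.ofReal b) ^ p := by
        rw [← ENNReal.ofReal_add ha hb]
        gcongr
    _ ≤ 2 ^ (p - 1) * (ENNReal.ofReal a ^ p + ENNReal.ofReal b ^ p) :=
        ENNReal.rpow_add_le_mul_rpow_add_rpow _ _ hp
    _ ≤ 2 * (ENNReal.ofReal (a ^ p) + ENNReal.ofReal (b ^ p)) := by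
        rw [ENNReal.ofReal_rpow_of_nonneg ha hp0, ENNReal.ofReal_rpow_of_nonneg hb hp0]
        gcongr
        exact (ENNReal.rpow_le_rpow_of_exponent_le (by norm_num) (by linarith : p - 1 ≤ 1)).trans_eq
          (ENNReal.rpow_one 2)

theorem measure_singleton_eq_zero_of_measure_ball_le {X : Type*} [PseudoMetricSpace X]
    [MeasurableSpace X] {μ : Measure X} {y : X} {r c : ℝ} (hr : 0 < r)
    (hball : ∀ ρ ∈ Ioc 0 r, μ (ball y ρ) ≤ ENNReal.ofReal (c * ρ ^ 2)) : μ {y} = 0 := by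
  have hlim : Tendsto (fun ρ : ℝ => ENNReal.ofReal (c * ρ ^ 2)) (𝓝 0) (𝓝 0) := by
    simpa using ENNReal.tendsto_ofReal ((continuous_const.mul (continuous_pow 2)).tendsto (0 : ℝ))
  refine nonpos_iff_eq_zero.1 (ge_of_tendsto (hlim.mono_left (nhdsWithin_le_nhds (s := Ioi 0))) ?_)
  filter_upwards [Ioc_mem_nhdsGT hr] with ρ hρ
  exact (measure_mono (singleton_subset_iff.2 (mem_ball_self hρ.1))).trans (hball ρ hρ)

section SingularKernel

variable {X : Type*} [PseudoMetricSpace X] [MeasurableSpace X] {μ : Measure X} {y : X}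

theorem measure_lt_inv_two_pi_dist_le
    (hball : ∀ ρ ∈ Ioc (0 : ℝ) (1 / 4), μ (ball y ρ) ≤ ENNReal.ofReal (π * ρ ^ 2))
    {t : ℝ} (ht : 1 ≤ t) :
    μ {x | t < (2 * π * dist x y)⁻¹} ≤ ENNReal.ofReal ((4 * π * t ^ 2)⁻¹) := by
  have ht0 : 0 < t := zero_lt_one.trans_le ht
  have hsub : {x | t < (2 * π * dist x y)⁻¹} ⊆ ball y (2 * π * t)⁻¹ := by
    intro x hx
    have hd : 0 < 2 * π * dist x y := inv_pos.1 (ht0.trans hx)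
    rw [mem_ball, mul_inv, lt_inv_mul_iff₀ (by positivity)]
    exact (lt_inv_comm₀ ht0 hd).1 hx
  have hr : (2 * π * t)⁻¹ ∈ Ioc (0 : ℝ) (1 / 4) := by
    refine ⟨by positivity, ?_⟩
    rw [one_div]
    exact inv_anti₀ (by norm_num) (by nlinarith [pi_gt_three])
  calc μ {x | t < (2 * π * dist x y)⁻¹} ≤ μ (ball y (2 * π * t)⁻¹) := measure_mono hsub
    _ ≤ ENNReal.ofReal (π * (2 * π * t)⁻¹ ^ 2) := hball _ hr
    _ = ENNReal.ofReal ((4 * π * t ^ 2)⁻¹) := by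
      congr 1
      field_simp
      ring

theorem lintegral_inv_two_pi_dist_rpow_le [OpensMeasurableSpace X]
    (hball : ∀ ρ ∈ Ioc (0 : ℝ) (1 / 4), μ (ball y ρ) ≤ ENNReal.ofReal (π * ρ ^ 2))
    {p : ℝ} (hp : 1 ≤ p) (hp2 : p < 2) :
    ∫⁻ x, ENNReal.ofReal ((2 * π * dist x y)⁻¹ ^ p) ∂μ
      ≤ ENNReal.ofReal p * (μ univ + ENNReal.ofReal ((4 * π)⁻¹ / (2 - p))) := by
  have hmeas : Measurable fun x => (2 * π * dist x y)⁻¹ :=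
    (measurable_const.mul (continuous_id.dist continuous_const).measurable).inv
  rw [lintegral_rpow_eq_lintegral_meas_lt_mul μ (.of_forall fun x => by positivity)
      hmeas.aemeasurable (by linarith), ← Ioc_union_Ioi_eq_Ioi zero_le_one,
    lintegral_union measurableSet_Ioi (Ioc_disjoint_Ioi le_rfl)]
  gcongr
  · calc ∫⁻ t in Ioc (0 : ℝ) 1, μ {x | t < (2 * π * dist x y)⁻¹} * ENNReal.ofReal (t ^ (p - 1))
        ≤ ∫⁻ t in Ioc (0 : ℝ) 1, μ univ := by
          refine setLIntegral_mono' measurableSet_Ioc fun t ht => ?_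
          refine mul_le_of_le_of_le_one (measure_mono (subset_univ _)) ?_
          exact ENNReal.ofReal_le_one.2 (rpow_le_one ht.1.le ht.2 (by linarith))
      _ = μ univ := by simp
  · have hint : IntegrableOn (fun t : ℝ => (4 * π)⁻¹ * t ^ (p - 3)) (Ioi 1) :=
      (integrableOn_Ioi_rpow_of_lt (by linarith) one_pos).const_mul _
    calc ∫⁻ t in Ioi 1, μ {x | t < (2 * π * dist x y)⁻¹} * ENNReal.ofReal (t ^ (p - 1))
        ≤ ∫⁻ t in Ioi 1, ENNReal.ofReal ((4 * π)⁻¹ * t ^ (p - 3)) := by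
          refine setLIntegral_mono' measurableSet_Ioi fun t ht => ?_
          have ht0 : (0 : ℝ) < t := zero_lt_one.trans ht
          calc μ {x | t < (2 * π * dist x y)⁻¹} * ENNReal.ofReal (t ^ (p - 1))
              ≤ ENNReal.ofReal ((4 * π * t ^ 2)⁻¹) * ENNReal.ofReal (t ^ (p - 1)) := by
                gcongr
                exact measure_lt_inv_two_pi_dist_le hball (le_of_lt ht)
            _ = ENNReal.ofReal ((4 * π)⁻¹ * t ^ (p - 3)) := by
                rw [← ENNReal.ofReal_mul (by positivity), show p - 3 = p - 1 - 2 by ring,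
                  rpow_sub ht0 (p - 1) 2, rpow_two]
                congr 1
                field_simp
      _ = ENNReal.ofReal ((4 * π)⁻¹ / (2 - p)) := by
          rw [← ofReal_integral_eq_lintegral_ofReal hint
            ((ae_restrict_iff' measurableSet_Ioi).2 (.of_forall fun t ht => ?_)),
            integral_const_mul, integral_Ioi_rpow_of_lt (by linarith) one_pos]
          · rw [one_rpow, show p - 3 + 1 = -(2 - p) by ring, neg_div_neg_eq, mul_one_div]
          · have ht0 : (0 : ℝ) < t := zero_lt_one.trans ht
            positivity

end SingularKernel

theorem two_mul_add_rpow_mul_le {L C p : ℝ} (hL : 1 ≤ L) (hC : 0 ≤ C) (hp : 1 ≤ p)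
    (hp2 : p < 2) :
    2 * (p * (L + (4 * π)⁻¹ / (2 - p)) + C ^ p * L) ≤ 5 * L * (1 + C) ^ 2 / (2 - p) := by
  have h2p : 0 < 2 - p := by linarith
  have hπ : p * (4 * π)⁻¹ ≤ 1 / 2 := by
    rw [← div_eq_mul_inv, div_le_iff₀ (by positivity)]
    nlinarith [pi_gt_three]
  have hCp : C ^ p ≤ (1 + C) ^ 2 := calc
    C ^ p ≤ (1 + C) ^ p := rpow_le_rpow hC (by linarith) (by linarith)
    _ ≤ (1 + C) ^ (2 : ℝ) := rpow_le_rpow_of_exponent_le (by linarith) hp2.le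
    _ = (1 + C) ^ 2 := rpow_two _
  have hC2 : 1 ≤ (1 + C) ^ 2 := by nlinarith
  rw [le_div_iff₀ h2p]
  calc 2 * (p * (L + (4 * π)⁻¹ / (2 - p)) + C ^ p * L) * (2 - p)
      = 2 * (p * (2 - p) * L + p * (4 * π)⁻¹ + C ^ p * (2 - p) * L) := by
        field_simp
    _ ≤ 2 * (L + 1 / 2 + (1 + C) ^ 2 * L) := by
        gcongr
        · nlinarith [sq_nonneg (p - 1)]
        · exact (mul_le_of_le_one_right (by positivity) (by linarith)).trans hCp
    _ ≤ 5 * L * (1 + C) ^ 2 := by nlinarith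

theorem lintegral_rpow_le_of_le_inv_two_pi_dist_add {X : Type*} [MetricSpace X]
    [MeasurableSpace X] [OpensMeasurableSpace X] {μ : Measure X} {y : X}
    (hball : ∀ ρ ∈ Ioc (0 : ℝ) (1 / 4), μ (ball y ρ) ≤ ENNReal.ofReal (π * ρ ^ 2))
    {L : ℝ} (hL : 1 ≤ L) (hμ : μ univ ≤ ENNReal.ofReal L) {C : ℝ} (hC : 0 ≤ C) {K : X → ℝ}
    (hK : ∀ x, x ≠ y → K x ≤ 1 / (2 * π * dist x y) + C) {p : ℝ} (hp : 1 ≤ p) (hp2 : p < 2) :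
    ∫⁻ x, ENNReal.ofReal (K x) ^ p ∂μ ≤ ENNReal.ofReal (5 * L * (1 + C) ^ 2 / (2 - p)) := by
  have hp0 : 0 < p := zero_lt_one.trans_le hp
  have h2p : 0 < 2 - p := by linarith
  have hy : μ {y} = 0 := measure_singleton_eq_zero_of_measure_ball_le (by norm_num) hball
  have hK_ae : ∀ᵐ x ∂μ, ENNReal.ofReal (K x) ^ p
      ≤ 2 * (ENNReal.ofReal ((2 * π * dist x y)⁻¹ ^ p) + ENNReal.ofReal (C ^ p)) := by
    filter_upwards [compl_mem_ae_iff.2 hy] with x hx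
    exact ofReal_rpow_le_two_mul_add (by positivity) hC ((hK x hx).trans_eq (by rw [one_div]))
      hp hp2.le
  calc ∫⁻ x, ENNReal.ofReal (K x) ^ p ∂μ
      ≤ ∫⁻ x, 2 * (ENNReal.ofReal ((2 * π * dist x y)⁻¹ ^ p) + ENNReal.ofReal (C ^ p)) ∂μ :=
        lintegral_mono_ae hK_ae
    _ = 2 * (∫⁻ x, ENNReal.ofReal ((2 * π * dist x y)⁻¹ ^ p) ∂μ
          + ENNReal.ofReal (C ^ p) * μ univ) := by
        rw [lintegral_const_mul' _ _ (by norm_num), lintegral_add_right _ measurable_const,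
          lintegral_const]
    _ ≤ 2 * (ENNReal.ofReal p * (ENNReal.ofReal L + ENNReal.ofReal ((4 * π)⁻¹ / (2 - p)))
          + ENNReal.ofReal (C ^ p) * ENNReal.ofReal L) := by
        gcongr
        exact (lintegral_inv_two_pi_dist_rpow_le hball hp hp2).trans (by gcongr)
    _ = ENNReal.ofReal (2 * (p * (L + (4 * π)⁻¹ / (2 - p)) + C ^ p * L)) := by
        rw [← ENNReal.ofReal_add (by linarith) (by positivity), ← ENNReal.ofReal_mul hp0.le,
          ← ENNReal.ofReal_mul (by positivity),
          ← ENNReal.ofReal_add (by positivity) (by positivity), ← ENNReal.ofReal_ofNat 2,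
          ← ENNReal.ofReal_mul (by norm_num)]
    _ ≤ ENNReal.ofReal (5 * L * (1 + C) ^ 2 / (2 - p)) :=
        ENNReal.ofReal_le_ofReal (two_mul_add_rpow_mul_le hL hC hp hp2)

theorem stmt_15 (L C1 : ℝ) (hL : 1 ≤ L) (hC1 : 0 ≤ C1) :
    ∃ C3 : ℝ, ∀ (X : Type) [MetricSpace X] [MeasurableSpace X] [BorelSpace X]
      (μ : Measure X),
      μ Set.univ ≤ ENNReal.ofReal L →
      Metric.diam (Set.univ : Set X) ≤ L →
      (∀ (y : X), ∀ ρ ∈ Set.Ioc (0 : ℝ) (1 / 4),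
        μ (Metric.ball y ρ) ≤ ENNReal.ofReal (Real.pi * ρ ^ 2)) →
      ∀ H : X → X → ℝ, Measurable (fun p : X × X => H p.1 p.2) →
      (∀ x y : X, 0 ≤ H x y) →
      (∀ x y : X, x ≠ y → H x y ≤ 1 / (2 * Real.pi * dist x y) + C1) →
      ∀ p ∈ Set.Ico (1 : ℝ) 2, ∀ f : X → ℝ, Integrable f μ →
        (∫⁻ x, ENNReal.ofReal (∫ y, H x y * |f y| ∂μ) ^ p ∂μ) ^ (1 / p)
          ≤ ENNReal.ofReal (C3 * (∫ y, |f y| ∂μ) / (2 - p) ^ (1 / p)) := by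
  set K := 5 * L * (1 + C1) ^ 2
  refine ⟨K, fun X _ _ _ μ hμ _ hball H hH hH0 hHle p ⟨hp, hp2⟩ f hf => ?_⟩
  have : IsFiniteMeasure μ := ⟨hμ.trans_lt ENNReal.ofReal_lt_top⟩
  have hkernel (y : X) : ∫⁻ x, ‖H x y‖ₑ ^ p ∂μ ≤ ENNReal.ofReal (K / (2 - p)) := by
    simpa only [Real.enorm_eq_ofReal (hH0 _ y)] using
      lintegral_rpow_le_of_le_inv_two_pi_dist_add (hball y) hL hμ hC1 (hHle · y) hp hp2
  have hv (x : X) : ENNReal.ofReal (∫ y, H x y * |f y| ∂μ) ≤ ∫⁻ y, ‖H x y‖ₑ * ‖f y‖ₑ ∂μ :=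
    (Real.ofReal_le_enorm _).trans
      ((enorm_integral_le_lintegral_enorm _).trans_eq (by simp only [enorm_mul, enorm_abs]))
  have hf1 : ∫⁻ y, ‖f y‖ₑ ∂μ = ENNReal.ofReal (∫ y, |f y| ∂μ) := by
    simpa only [Real.norm_eq_abs] using (ofReal_integral_norm_eq_lintegral_enorm hf).symm
  calc (∫⁻ x, ENNReal.ofReal (∫ y, H x y * |f y| ∂μ) ^ p ∂μ) ^ (1 / p)
      ≤ (∫⁻ x, (∫⁻ y, ‖H x y‖ₑ * ‖f y‖ₑ ∂μ) ^ p ∂μ) ^ (1 / p) := by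
        gcongr with x
        exact hv x
    _ ≤ ENNReal.ofReal (K / (2 - p)) ^ (1 / p) * ENNReal.ofReal (∫ y, |f y| ∂μ) :=
        hf1 ▸ lintegral_rpow_lintegral_mul_le hH.enorm hf.1.enorm hp hkernel
    _ ≤ ENNReal.ofReal (K * (∫ y, |f y| ∂μ) / (2 - p) ^ (1 / p)) := by
        have hK : 1 ≤ K := by nlinarith [sq_nonneg C1]
        have hI : 0 ≤ ∫ y, |f y| ∂μ := integral_nonneg fun y => abs_nonneg _
        have h2p : 0 < 2 - p := by linarith
        rw [ENNReal.ofReal_rpow_of_nonneg (by positivity) (by positivity),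
          ← ENNReal.ofReal_mul (by positivity), div_rpow (by positivity) h2p.le, div_mul_eq_mul_div]
        gcongr
        exact rpow_le_self_of_one_le hK ((div_le_one (by linarith)).2 hp)
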